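/- arXiv:1408.5682 — 2 statements merged into one kernel-verified Lean document; each statement's English description precedes it below -/
import Mathlib

section
/- Let (μ_n)_{n≥1} be a sequence of probability measures on ℝ, each having finite moments up to order 4, such that for every n the first moment of μ_n is 0 and the second moment of μ_n is 1. If the fourth moment of μ_n converges to 1 as n → ∞, then μ_n converges weakly to the centered Bernoulli distribution (1/2)δ_{-1} + (1/2)δ_{1}. -/
open MeasureTheory Filter
open scoped ENNReal Topology

noncomputable section

/-- The distance `k`-graph of a graph: same vertices, edges between vertices at distance `k`. -/
def distGraph {W : Type*} (H : SimpleGraph W) (k : ℕ) : SimpleGraph W where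
  Adj x y := x ≠ y ∧ H.dist x y = k
  symm := ⟨fun x y h => ⟨h.1.symm, by rw [SimpleGraph.dist_comm]; exact h.2⟩⟩
  loopless := ⟨fun x h => h.1 rfl⟩

/-- Vertex set of the `N`-fold star power of a graph rooted at `e`:
the common root `none`, plus `N` copies of the non-root vertices. -/
abbrev StarVert (V : Type*) (e : V) (N : ℕ) := Option (Fin N × {v : V // v ≠ e})

def starAdj {V : Type*} (G : SimpleGraph V) (e : V) (N : ℕ) :
    StarVert V e N → StarVert V e N → Prop
  | none, none => False
  | none, some q => G.Adj e q.2.1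
  | some p, none => G.Adj p.2.1 e
  | some p, some q => p.1 = q.1 ∧ G.Adj p.2.1 q.2.1

/-- The `N`-fold star power of a rooted graph `(G, e)`: `N` copies of `G` glued at `e`. -/
def starPower {V : Type*} (G : SimpleGraph V) (e : V) (N : ℕ) :
    SimpleGraph (StarVert V e N) where
  Adj := starAdj G e N
  symm := by
    refine ⟨?_⟩
    rintro (_ | p) (_ | q) h
    · exact h.elim
    · exact h.symm
    · exact h.symm
    · exact ⟨h.1.symm, h.2.symm⟩
  loopless := by
    refine ⟨?_⟩
    rintro (_ | p) h
    · exact h.elim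
    · exact G.loopless.irrefl _ h.2

/-- The vertex of the `i`-th copy of `G` in the `N`-fold star power corresponding to `v ∈ G`. -/
def rootedEmbed {V : Type*} [DecidableEq V] (e : V) (N : ℕ) (i : Fin N) (v : V) :
    StarVert V e N :=
  if h : v = e then none else some (i, ⟨v, h⟩)

open scoped Classical in
/-- The real adjacency matrix of a graph. -/
def adjMat {W : Type*} [Fintype W] (H : SimpleGraph W) : Matrix W W ℝ :=
  fun x y => if H.Adj x y then 1 else 0

/-- The centered Bernoulli distribution `(1/2)δ_{-1} + (1/2)δ_1`. -/
def bern : Measure ℝ := (1/2 : ℝ≥0∞) • Measure.dirac (-1) + (1/2 : ℝ≥0∞) • Measure.dirac 1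

/-- The Cauchy transform of a measure on `ℝ`. -/
def cauchyT (μ : Measure ℝ) (z : ℂ) : ℂ := ∫ x, (z - (x : ℂ))⁻¹ ∂μ

/-- The distance `d(μ₁,μ₂) = sup_{Im z ≥ 1} |G_{μ₁}(z) - G_{μ₂}(z)|`. -/
def cdist (μ₁ μ₂ : Measure ℝ) : ℝ :=
  ⨆ z : {z : ℂ // 1 ≤ z.im}, ‖cauchyT μ₁ z - cauchyT μ₂ z‖

/-! Since `m₂(μₙ) = 1`, `∫ (x² - 1)² dμₙ = m₄(μₙ) - 1 → 0`, so `μₙ` concentrates near `±1`.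
Subtract from `f` the affine function `a + b x` agreeing with it at `±1`; its integral against
`μₙ` is `a` because `m₁(μₙ) = 0`. The remainder `g` vanishes at `±1` and grows at most
quadratically, so for every `ε > 0` there is `C` with `|g| ≤ ε + C (x² - 1)²`, whence
`limsup |∫ g dμₙ| ≤ ε`. -/

lemma integral_bern (f : ℝ → ℝ) : ∫ x, f x ∂bern = (f (-1) + f 1) / 2 := by
  have hint (c : ℝ) : Integrable f ((1 / 2 : ℝ≥0∞) • Measure.dirac c) :=
    (integrable_dirac (by simp)).smul_measure (by simp)
  rw [bern, integral_add_measure (hint _) (hint _), integral_smul_measure, integral_smul_measure,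
    integral_dirac, integral_dirac]
  norm_num
  ring

lemma integral_sq_sub_one_sq {ν : Measure ℝ} [IsProbabilityMeasure ν]
    (h2 : Integrable (fun x : ℝ => x ^ 2) ν) (h4 : Integrable (fun x : ℝ => x ^ 4) ν) :
    ∫ x, (x ^ 2 - 1) ^ 2 ∂ν = ∫ x, x ^ 4 ∂ν - 2 * ∫ x, x ^ 2 ∂ν + 1 := by
  have hexp : (fun x : ℝ => (x ^ 2 - 1) ^ 2) = fun x => x ^ 4 - 2 * x ^ 2 + 1 := by
    funext x; ring
  rw [hexp, integral_add (by exact h4.sub (h2.const_mul 2)) (integrable_const 1),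
    integral_sub h4 (h2.const_mul 2), integral_const_mul, integral_const]
  simp

lemma integrable_sq_sub_one_sq {ν : Measure ℝ} [IsFiniteMeasure ν]
    (h2 : Integrable (fun x : ℝ => x ^ 2) ν) (h4 : Integrable (fun x : ℝ => x ^ 4) ν) :
    Integrable (fun x : ℝ => (x ^ 2 - 1) ^ 2) ν :=
  ((h4.sub (h2.const_mul 2)).add (integrable_const 1)).congr
    (ae_of_all _ fun x => by simp only [Pi.add_apply, Pi.sub_apply]; ring)

lemma pow_four_mul_one_add_sq_le {δ x : ℝ} (hδ : 0 ≤ δ) (hδ1 : δ ≤ 1)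
    (hx_one : δ ≤ |x - 1|) (hx_neg_one : δ ≤ |x + 1|) :
    δ ^ 4 * (1 + x ^ 2) ≤ 5 * (x ^ 2 - 1) ^ 2 := by
  have h_one : δ ^ 2 ≤ (x - 1) ^ 2 := by
    simpa only [sq_abs] using pow_le_pow_left₀ hδ hx_one 2
  have h_neg_one : δ ^ 2 ≤ (x + 1) ^ 2 := by
    simpa only [sq_abs] using pow_le_pow_left₀ hδ hx_neg_one 2
  have hδ4 : δ ^ 4 ≤ (x ^ 2 - 1) ^ 2 := by
    have : (x ^ 2 - 1) ^ 2 = (x - 1) ^ 2 * (x + 1) ^ 2 := by ring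
    rw [this]; nlinarith [sq_nonneg δ]
  have hδ4_le_one : δ ^ 4 ≤ 1 := pow_le_one₀ hδ hδ1
  rcases le_or_gt (x ^ 2) 4 with hx | hx <;> nlinarith

lemma BoundedContinuousFunction.abs_sub_sub_mul_le (f : BoundedContinuousFunction ℝ ℝ)
    (a b x : ℝ) :
    |f x - a - b * x| ≤ (‖f‖ + |a| + |b|) * (1 + x ^ 2) := by
  have hf : |f x| ≤ ‖f‖ := by simpa only [Real.norm_eq_abs] using f.norm_coe_le_norm x
  have hx : |x| ≤ 1 + x ^ 2 := by nlinarith [sq_nonneg (|x| - 1), sq_abs x]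
  calc |f x - a - b * x| ≤ |f x| + |a| + |b| * |x| := by
        rw [← abs_mul]; linarith [abs_sub (f x - a) (b * x), abs_sub (f x) a]
    _ ≤ (‖f‖ + |a| + |b|) * (1 + x ^ 2) := by
        nlinarith [mul_le_mul_of_nonneg_left hx (abs_nonneg b), norm_nonneg f, abs_nonneg a,
          sq_nonneg x]

lemma exists_abs_le_add_mul_sq_sub_one_sq {g : ℝ → ℝ} (hg : Continuous g) (hg_one : g 1 = 0)
    (hg_neg_one : g (-1) = 0) {K : ℝ} (hK : ∀ x, |g x| ≤ K * (1 + x ^ 2)) {ε : ℝ} (hε : 0 < ε) :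
    ∃ C, ∀ x, |g x| ≤ ε + C * (x ^ 2 - 1) ^ 2 := by
  have hnear (c : ℝ) (hc : g c = 0) : ∃ δ > 0, ∀ x, |x - c| < δ → |g x| < ε := by
    simpa [hc, Real.dist_eq] using Metric.continuousAt_iff.mp (hg.continuousAt (x := c)) ε hε
  obtain ⟨δ₁, hδ₁, hnear_one⟩ := hnear 1 hg_one
  obtain ⟨δ₂, hδ₂, hnear_neg_one⟩ := hnear (-1) hg_neg_one
  set δ := min (min δ₁ δ₂) 1
  have hδ : 0 < δ := lt_min (lt_min hδ₁ hδ₂) one_pos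
  have hK0 : 0 ≤ K := by simpa using (abs_nonneg (g 0)).trans (hK 0)
  have hC : 0 ≤ 5 * K / δ ^ 4 := by positivity
  refine ⟨5 * K / δ ^ 4, fun x => ?_⟩
  have hCq : 0 ≤ 5 * K / δ ^ 4 * (x ^ 2 - 1) ^ 2 := mul_nonneg hC (sq_nonneg _)
  by_cases hx_one : |x - 1| < δ
  · linarith [hnear_one x (hx_one.trans_le ((min_le_left _ _).trans (min_le_left _ _)))]
  by_cases hx_neg_one : |x + 1| < δ
  · have hx : |x - -1| < δ₂ := by
      simpa using hx_neg_one.trans_le ((min_le_left _ _).trans (min_le_right _ _))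
    linarith [hnear_neg_one x hx]
  push Not at hx_one hx_neg_one
  have hfar := pow_four_mul_one_add_sq_le hδ.le (min_le_right _ _) hx_one hx_neg_one
  calc |g x| ≤ K * (1 + x ^ 2) := hK x
    _ ≤ 5 * K / δ ^ 4 * (x ^ 2 - 1) ^ 2 := by
        rw [div_mul_eq_mul_div, le_div_iff₀ (by positivity)]; nlinarith
    _ ≤ ε + 5 * K / δ ^ 4 * (x ^ 2 - 1) ^ 2 := by linarith

lemma abs_integral_le_add_mul_integral {ν : Measure ℝ} [IsProbabilityMeasure ν] {g q : ℝ → ℝ}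
    (hg : Continuous g) (hq : Integrable q ν) {ε C : ℝ} (hgq : ∀ x, |g x| ≤ ε + C * q x) :
    |∫ x, g x ∂ν| ≤ ε + C * ∫ x, q x ∂ν := by
  have hbound : Integrable (fun x => ε + C * q x) ν := (integrable_const ε).add (hq.const_mul C)
  have hgi : Integrable g ν :=
    hbound.mono' hg.aestronglyMeasurable (ae_of_all _ fun x => by simpa using hgq x)
  calc |∫ x, g x ∂ν| ≤ ∫ x, |g x| ∂ν := abs_integral_le_integral_abs
    _ ≤ ∫ x, (ε + C * q x) ∂ν := integral_mono hgi.abs hbound hgq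
    _ = ε + C * ∫ x, q x ∂ν := by
        rw [integral_add (integrable_const ε) (hq.const_mul C), integral_const, integral_const_mul]
        simp

theorem tendsto_integral_zero_of_tendsto_integral_sq_sub_one_sq {ι : Type*} {l : Filter ι}
    {μ : ι → Measure ℝ} [∀ i, IsProbabilityMeasure (μ i)]
    (hq : ∀ i, Integrable (fun x : ℝ => (x ^ 2 - 1) ^ 2) (μ i))
    (hlim : Tendsto (fun i => ∫ x, (x ^ 2 - 1) ^ 2 ∂μ i) l (𝓝 0))
    {g : ℝ → ℝ} (hg : Continuous g) (hg_one : g 1 = 0) (hg_neg_one : g (-1) = 0) {K : ℝ}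
    (hK : ∀ x, |g x| ≤ K * (1 + x ^ 2)) :
    Tendsto (fun i => ∫ x, g x ∂μ i) l (𝓝 0) := by
  rw [Metric.tendsto_nhds]
  intro ε hε
  obtain ⟨C, hC⟩ := exists_abs_le_add_mul_sq_sub_one_sq hg hg_one hg_neg_one hK (half_pos hε)
  have hsmall : ∀ᶠ i in l, C * ∫ x, (x ^ 2 - 1) ^ 2 ∂μ i < ε / 2 :=
    (hlim.const_mul C).eventually (gt_mem_nhds (by simpa using half_pos hε))
  filter_upwards [hsmall] with i hi
  rw [Real.dist_0_eq_abs]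
  linarith [abs_integral_le_add_mul_integral hg (hq i) hC (ν := μ i)]

/-- Fourth moment lemma: if `m₁(μₙ) = 0`, `m₂(μₙ) = 1` and `m₄(μₙ) → 1`,
then `μₙ` converges weakly to the centered Bernoulli distribution. -/
theorem fourth_moment_lemma_bernoulli
    (μ : ℕ → Measure ℝ)
    (hprob : ∀ n, IsProbabilityMeasure (μ n))
    (hint : ∀ n, ∀ m ≤ 4, Integrable (fun x : ℝ => x ^ m) (μ n))
    (h1 : ∀ n, ∫ x, x ∂(μ n) = 0)
    (h2 : ∀ n, ∫ x, x ^ 2 ∂(μ n) = 1)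
    (h4 : Tendsto (fun n => ∫ x, x ^ 4 ∂(μ n)) atTop (𝓝 1)) :
    ∀ f : BoundedContinuousFunction ℝ ℝ,
      Tendsto (fun n => ∫ x, f x ∂(μ n)) atTop (𝓝 (∫ x, f x ∂bern)) := by
  intro f
  set a := (f (-1) + f 1) / 2
  set b := (f 1 - f (-1)) / 2
  have hx (n : ℕ) : Integrable (fun x : ℝ => x) (μ n) := by simpa using hint n 1 (by norm_num)
  have hm2 (n : ℕ) := hint n 2 (by norm_num)
  have hm4 (n : ℕ) := hint n 4 le_rfl
  have hvar (n : ℕ) : ∫ x, (x ^ 2 - 1) ^ 2 ∂μ n = ∫ x, x ^ 4 ∂μ n - 1 := by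
    rw [integral_sq_sub_one_sq (hm2 n) (hm4 n), h2 n]; ring
  have hg : Tendsto (fun n => ∫ x, (f x - a - b * x) ∂μ n) atTop (𝓝 0) := by
    refine tendsto_integral_zero_of_tendsto_integral_sq_sub_one_sq
      (fun n => integrable_sq_sub_one_sq (hm2 n) (hm4 n)) ?_ (by fun_prop)
      (by simp only [a, b]; ring) (by simp only [a, b]; ring) (f.abs_sub_sub_mul_le a b)
    simp_rw [hvar]
    simpa using h4.sub_const 1
  have hfg (n : ℕ) : ∫ x, (f x - a - b * x) ∂μ n = ∫ x, f x ∂μ n - a := by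
    rw [integral_sub (by exact (f.integrable _).sub (integrable_const a)) ((hx n).const_mul b),
      integral_sub (f.integrable _) (integrable_const a), integral_const_mul, h1 n]
    simp
  rw [integral_bern]
  simpa [hfg] using hg.add_const a

end
end

section
/- Let μ be a probability measure on ℝ with finite moments up to order 4, m₁(μ) = 0, m₂(μ) = 1, and m₄(μ) − 1 ≤ 1/16. Write the Cauchy transform of μ in continued-fraction form as G_μ(z) = 1/(z − 1/(z − f(z))) with f(z) = β₁ + γ₁·G_ν(z) for some probability measure ν, where β₁, γ₁ are the Jacobi parameters of μ. Then for every z with Im(z) ≥ 1: |f(z)| ≤ 2√(m₄(μ) − 1) ≤ 1/2, |1/(z² − 1)| ≤ 1, and |1/(z² − 1 − f(z)·z)| ≤ 2. -/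
open MeasureTheory Filter
open scoped ENNReal Topology

noncomputable section

/-!
Since `m₁ = 0` and `m₂ = 1`, the second Jacobi parameter is `γ₁ = m₄ − 1 − m₃² = ∫ (x² − m₃x − 1)² dμ ≥ 0`,
so `β₁² ≤ m₄ − 1`; with `|G_ν| ≤ 1` on `Im z ≥ 1` this gives `|f| ≤ |β₁| + γ₁ ≤ 2√(m₄ − 1)`.
The last bound comes from the factorisation `z² − 1 − f·z = (z − f)(z − (z − f)⁻¹)`, whose second factor
is `1/G_μ(z)`, while `|z − f| ≥ |z| − |f| ≥ 1/2`.
-/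

lemma norm_cauchyT_le_inv_im (κ : Measure ℝ) [IsProbabilityMeasure κ] {z : ℂ} (hz : 0 < z.im) :
    ‖cauchyT κ z‖ ≤ z.im⁻¹ := by
  have hpoint : ∀ x : ℝ, ‖(z - (x : ℂ))⁻¹‖ ≤ z.im⁻¹ := fun x => by
    rw [norm_inv]
    exact inv_anti₀ hz (by simpa using Complex.im_le_norm (z - x))
  simpa [cauchyT] using norm_integral_le_of_norm_le_const (μ := κ) (.of_forall hpoint)

lemma norm_cauchyT_le_one (κ : Measure ℝ) [IsProbabilityMeasure κ] {z : ℂ} (hz : 1 ≤ z.im) :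
    ‖cauchyT κ z‖ ≤ 1 :=
  (norm_cauchyT_le_inv_im κ (one_pos.trans_le hz)).trans (inv_le_one_of_one_le₀ hz)

section Moments

variable {μ : Measure ℝ} [IsProbabilityMeasure μ]

lemma integral_quartic (hint : ∀ m ≤ 4, Integrable (fun x : ℝ => x ^ m) μ) (a b c d e : ℝ) :
    ∫ x, (a * x ^ 4 + b * x ^ 3 + c * x ^ 2 + d * x + e) ∂μ =
      a * ∫ x, x ^ 4 ∂μ + b * ∫ x, x ^ 3 ∂μ + c * ∫ x, x ^ 2 ∂μ + d * ∫ x, x ∂μ + e := by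
  have i1 : Integrable (fun x : ℝ => x) μ := by simpa using hint 1 (by norm_num)
  have ia : Integrable (fun x : ℝ => a * x ^ 4) μ := (hint 4 le_rfl).const_mul a
  have ib : Integrable (fun x : ℝ => b * x ^ 3) μ := (hint 3 (by norm_num)).const_mul b
  have ic : Integrable (fun x : ℝ => c * x ^ 2) μ := (hint 2 (by norm_num)).const_mul c
  have id : Integrable (fun x : ℝ => d * x) μ := i1.const_mul d
  rw [integral_add (by fun_prop) (by fun_prop), integral_add (by fun_prop) (by fun_prop),
    integral_add (by fun_prop) (by fun_prop), integral_add (by fun_prop) (by fun_prop),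
    integral_const_mul, integral_const_mul, integral_const_mul, integral_const_mul]
  simp

lemma sq_integral_pow_three_le (hint : ∀ m ≤ 4, Integrable (fun x : ℝ => x ^ m) μ)
    (h1 : ∫ x, x ∂μ = 0) (h2 : ∫ x, x ^ 2 ∂μ = 1) :
    (∫ x, x ^ 3 ∂μ) ^ 2 ≤ (∫ x, x ^ 4 ∂μ) - 1 := by
  set m3 := ∫ x, x ^ 3 ∂μ
  have hsq : ∫ x, (x ^ 2 - m3 * x - 1) ^ 2 ∂μ = (∫ x, x ^ 4 ∂μ) - 1 - m3 ^ 2 := by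
    have hexpand : (fun x : ℝ => (x ^ 2 - m3 * x - 1) ^ 2) =
        fun x => 1 * x ^ 4 + (-2 * m3) * x ^ 3 + (m3 ^ 2 - 2) * x ^ 2 + (2 * m3) * x + 1 := by
      ext x; ring
    rw [hexpand, integral_quartic hint, h1, h2]
    ring
  linarith [hsq ▸ integral_nonneg fun x => sq_nonneg (x ^ 2 - m3 * x - 1)]

end Moments

lemma norm_ofReal_add_mul_le_two_sqrt {β γ s : ℝ} {G : ℂ} (hγ : 0 ≤ γ) (hβγ : β ^ 2 + γ ≤ s)
    (hs : s ≤ 1) (hG : ‖G‖ ≤ 1) : ‖(β : ℂ) + γ * G‖ ≤ 2 * √s := by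
  have hβ : |β| ≤ √s := Real.abs_le_sqrt (by nlinarith)
  have hγs : γ ≤ √s := by
    have hs0 : 0 ≤ s := by nlinarith
    calc γ ≤ s := by nlinarith
      _ = √s * √s := (Real.mul_self_sqrt hs0).symm
      _ ≤ √s := mul_le_of_le_one_left (Real.sqrt_nonneg s) (Real.sqrt_le_one.mpr hs)
  calc ‖(β : ℂ) + γ * G‖ ≤ |β| + γ * ‖G‖ := by
        simpa [abs_of_nonneg hγ] using norm_add_le (β : ℂ) (γ * G)
    _ ≤ |β| + γ := by gcongr; exact mul_le_of_le_one_right hγ hG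
    _ ≤ 2 * √s := by linarith

lemma norm_inv_sq_sub_one_le_one {z : ℂ} (hz : 1 ≤ z.im) : ‖(z ^ 2 - 1)⁻¹‖ ≤ 1 := by
  have hsub : 1 ≤ ‖z - 1‖ := hz.trans (by simpa using Complex.im_le_norm (z - 1))
  have hadd : 1 ≤ ‖z + 1‖ := hz.trans (by simpa using Complex.im_le_norm (z + 1))
  rw [show z ^ 2 - 1 = (z - 1) * (z + 1) by ring, norm_inv, norm_mul]
  exact inv_le_one_of_one_le₀ (one_le_mul_of_one_le_of_one_le hsub hadd)

lemma inv_sq_sub_one_sub_mul_eq {K : Type*} [Field K] {z w : K} (h : z - w ≠ 0) :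
    (z ^ 2 - 1 - w * z)⁻¹ = (z - w)⁻¹ * (z - (z - w)⁻¹)⁻¹ := by
  rw [← mul_inv]
  congr 1
  field_simp
  ring

lemma norm_inv_sq_sub_one_sub_mul_le {z w : ℂ} (hz : 1 ≤ z.im) (hw : ‖w‖ ≤ 1 / 2) :
    ‖(z ^ 2 - 1 - w * z)⁻¹‖ ≤ 2 * ‖(z - (z - w)⁻¹)⁻¹‖ := by
  have hzw : 1 / 2 ≤ ‖z - w‖ := by
    linarith [hz.trans (Complex.im_le_norm z), norm_sub_norm_le z w]
  have hne : z - w ≠ 0 := norm_pos_iff.mp (by linarith)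
  rw [inv_sq_sub_one_sub_mul_eq hne, norm_mul, norm_inv]
  gcongr
  exact inv_le_of_inv_le₀ (by norm_num) (by simpa using hzw)

/-- Bounds used in the quantitative fourth moment estimate: writing
`G_μ(z) = 1/(z − 1/(z − f(z)))` with `f(z) = β₁ + γ₁·G_ν(z)`, where `β₁ = m₃(μ)` and
`γ₁ = m₄(μ) − 1 − m₃(μ)²` are the Jacobi parameters, one has for `Im z ≥ 1`:
`|f(z)| ≤ 2√(m₄ − 1) ≤ 1/2`, `|1/(z² − 1)| ≤ 1` and `|1/(z² − 1 − f(z)z)| ≤ 2`. -/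
theorem continued_fraction_tail_bounds
    (μ ν : Measure ℝ) [IsProbabilityMeasure μ] [IsProbabilityMeasure ν]
    (hint : ∀ m ≤ 4, Integrable (fun x : ℝ => x ^ m) μ)
    (h1 : ∫ x, x ∂μ = 0) (h2 : ∫ x, x ^ 2 ∂μ = 1)
    (h4 : (∫ x, x ^ 4 ∂μ) - 1 ≤ 1 / 16)
    (f : ℂ → ℂ)
    (hf : ∀ z : ℂ, 1 ≤ z.im →
      f z = (Complex.ofReal (∫ x, x ^ 3 ∂μ)) +
        (Complex.ofReal ((∫ x, x ^ 4 ∂μ) - 1 - (∫ x, x ^ 3 ∂μ) ^ 2)) * cauchyT ν z)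
    (hG : ∀ z : ℂ, 1 ≤ z.im → cauchyT μ z = (z - (z - f z)⁻¹)⁻¹) :
    ∀ z : ℂ, 1 ≤ z.im →
      ‖f z‖ ≤ 2 * Real.sqrt ((∫ x, x ^ 4 ∂μ) - 1) ∧
      2 * Real.sqrt ((∫ x, x ^ 4 ∂μ) - 1) ≤ 1 / 2 ∧
      ‖(z ^ 2 - 1)⁻¹‖ ≤ 1 ∧
      ‖(z ^ 2 - 1 - f z * z)⁻¹‖ ≤ 2 := by
  intro z hz
  have hβ := sq_integral_pow_three_le hint h1 h2
  have hfz : ‖f z‖ ≤ 2 * √((∫ x, x ^ 4 ∂μ) - 1) := by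
    rw [hf z hz]
    exact norm_ofReal_add_mul_le_two_sqrt (by linarith) (by linarith) (by linarith)
      (norm_cauchyT_le_one ν hz)
  have hsqrt : 2 * √((∫ x, x ^ 4 ∂μ) - 1) ≤ 1 / 2 := by
    have hquarter : √((∫ x, x ^ 4 ∂μ) - 1) ≤ 1 / 4 :=
      Real.sqrt_le_iff.mpr ⟨by norm_num, by linarith⟩
    linarith
  refine ⟨hfz, hsqrt, norm_inv_sq_sub_one_le_one hz, ?_⟩
  calc ‖(z ^ 2 - 1 - f z * z)⁻¹‖ ≤ 2 * ‖(z - (z - f z)⁻¹)⁻¹‖ :=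
        norm_inv_sq_sub_one_sub_mul_le hz (hfz.trans hsqrt)
    _ = 2 * ‖cauchyT μ z‖ := by rw [hG z hz]
    _ ≤ 2 := by linarith [norm_cauchyT_le_one μ hz]
end
end
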